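/- Let Γ=(G,σ) be a weighted signed graph with at least one edge. Then (w²/W)·(min_{u∼v} ♯⁻(u,v))/(max_u d(u)) ≤ λ₁(Δ^σ) and λ_N(Δ^σ) ≤ 2 − (w²/W)·(min_{u∼v} ♯⁺(u,v))/(max_u d(u)), where w = min_{u∼v} w(u,v), W = max_{u∼v} w(u,v), and the minima over u ∼ v run over all adjacent pairs. -/

import Mathlib

open Finset Real

open scoped Classical

noncomputable section

namespace SignedGraph

variable {N : ℕ}

/-- The degree `d(u) = Σ_v w(u,v)` of a vertex. -/
def deg (w : Fin N → Fin N → ℝ) (u : Fin N) : ℝ := ∑ v, w u v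

/-- Hypotheses making `(w, sgn)` a weighted signed graph: `w` is a symmetric nonnegative
weight function vanishing on the diagonal and `sgn` is a symmetric `±1`-valued signature. -/
structure IsWSG {N : ℕ} (w : Fin N → Fin N → ℝ) (sgn : Fin N → Fin N → ℝ) : Prop where
  w_symm : ∀ u v, w u v = w v u
  w_nonneg : ∀ u v, 0 ≤ w u v
  w_loopless : ∀ u, w u u = 0
  sgn_symm : ∀ u v, sgn u v = sgn v u
  sgn_pm : ∀ u v, sgn u v = 1 ∨ sgn u v = -1

/-- The signature obtained from `sgn` by switching with the function `θ : V → {±1}`. -/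
def switchSgn (sgn : Fin N → Fin N → ℝ) (θ : Fin N → ℝ) : Fin N → Fin N → ℝ :=
  fun u v => θ u * sgn u v * θ v

/-- The signed adjacency matrix `A^σ`, `A^σ_{uv} = σ(u,v) w(u,v)`. -/
def adj (w sgn : Fin N → Fin N → ℝ) : Matrix (Fin N) (Fin N) ℝ :=
  Matrix.of fun u v => sgn u v * w u v

/-- The symmetric form `I - D^{-1/2} A^σ D^{-1/2}` of the signed normalized Laplacian,
whose eigenvalues are those of `Δ^σ = I - D^{-1} A^σ`. -/
def nlapSym (w sgn : Fin N → Fin N → ℝ) : Matrix (Fin N) (Fin N) ℝ :=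
  Matrix.of fun u v =>
    (if u = v then (1 : ℝ) else 0) -
      sgn u v * w u v / (Real.sqrt (deg w u) * Real.sqrt (deg w v))

/-- The signed (Kirchhoff) Laplacian `L^σ = D - A^σ`. -/
def lap (w sgn : Fin N → Fin N → ℝ) : Matrix (Fin N) (Fin N) ℝ :=
  Matrix.diagonal (deg w) - adj w sgn

/-- The nondecreasing enumeration of the eigenvalues (with multiplicity) of a real
symmetric matrix; junk value `0` if the matrix is not symmetric.  `evals M ⟨k-1,_⟩`
is the `k`-th smallest eigenvalue `λ_k(M)`. -/
def evals (M : Matrix (Fin N) (Fin N) ℝ) : Fin N → ℝ :=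
  if h : M.IsHermitian then (fun i => h.eigenvalues (Tuple.sort h.eigenvalues i)) else 0

/-- The signed triangle count `♯^s(u,v)`: the number of common neighbours `u'` of `u` and
`v` with `σ(u,v)σ(v,u')σ(u',u) = s`. -/
def triCount (w sgn : Fin N → Fin N → ℝ) (s : ℝ) (u v : Fin N) : ℕ :=
  (Finset.univ.filter
    (fun u' => 0 < w u u' ∧ 0 < w v u' ∧ sgn u v * sgn v u' * sgn u' u = s)).card

/-!
Let `c = (w²/W)·(min ♯⁻)/(max d)` and let `λ` be an eigenvalue of `D⁻¹A^σ`, so that `1 - λ` is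
one of `Δ^σ`, with `A^σ y = λ D y`, `y ≠ 0`. Then `M = c A^σ + A^σ D⁻¹ A^σ` satisfies
`M y = (cλ + λ²) D y`. The entry `M_{uv}` is a signed sum over the paths `u z v`. When `u ∼ v`,
the negative triangles over `uv` contribute at least `c w(u,v)` with the sign opposite to
`σ(u,v)`, and so cancel the term `c σ(u,v) w(u,v)`; hence `Σ_v |M_{uv}| ≤ (1 - c) d(u)`.
Reading the eigenvalue equation at a vertex where `|y|` is maximal gives `|cλ + λ²| ≤ 1 - c`,
hence `λ ≤ 1 - c`. Replacing `σ` by `-σ` swaps `♯⁺` and `♯⁻` and changes `λ` to `-λ`, which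
gives the upper bound.
-/

open Matrix

theorem abs_le_of_mulVec_eq_smul_diagonal_mulVec {ι : Type*} [Fintype ι] [DecidableEq ι]
    {M : Matrix ι ι ℝ} {d y : ι → ℝ} {α r : ℝ} (hd : ∀ u, 0 < d u) (hy : y ≠ 0)
    (heig : M *ᵥ y = α • (diagonal d *ᵥ y)) (hrow : ∀ u, ∑ v, |M u v| ≤ r * d u) :
    |α| ≤ r := by
  obtain ⟨v₀, hv₀⟩ := Function.ne_iff.mp hy
  obtain ⟨u, -, hmax⟩ := univ.exists_max_image (fun v => |y v|) ⟨v₀, mem_univ v₀⟩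
  have hyu : 0 < |y u| := (abs_pos.mpr hv₀).trans_le (hmax v₀ (mem_univ v₀))
  have key : |α| * d u * |y u| ≤ r * d u * |y u| :=
    calc |α| * d u * |y u| = |(M *ᵥ y) u| := by
          rw [heig, Pi.smul_apply, mulVec_diagonal, smul_eq_mul, abs_mul, abs_mul,
            abs_of_pos (hd u), mul_assoc]
      _ = |∑ v, M u v * y v| := rfl
      _ ≤ ∑ v, |M u v| * |y u| := by
          refine (abs_sum_le_sum_abs _ _).trans (sum_le_sum fun v _ => ?_)
          rw [abs_mul]
          exact mul_le_mul_of_nonneg_left (hmax v (mem_univ v)) (abs_nonneg _)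
      _ ≤ r * d u * |y u| := by rw [← sum_mul]; exact mul_le_mul_of_nonneg_right (hrow u) hyu.le
  exact le_of_mul_le_mul_right (le_of_mul_le_mul_right key hyu) (hd u)

def edgeValues (w f : Fin N → Fin N → ℝ) : Set ℝ := {x | ∃ u v, 0 < w u v ∧ x = f u v}

theorem edgeValues_finite (w f : Fin N → Fin N → ℝ) : (edgeValues w f).Finite :=
  (Set.finite_range fun p : Fin N × Fin N => f p.1 p.2).subset <| by
    rintro x ⟨u, v, -, rfl⟩
    exact ⟨(u, v), rfl⟩

theorem csInf_edgeValues_le {w : Fin N → Fin N → ℝ} (f : Fin N → Fin N → ℝ) {u v : Fin N}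
    (huv : 0 < w u v) : sInf (edgeValues w f) ≤ f u v :=
  csInf_le (edgeValues_finite w f).bddBelow ⟨u, v, huv, rfl⟩

theorem le_csSup_edgeValues {w : Fin N → Fin N → ℝ} (f : Fin N → Fin N → ℝ) {u v : Fin N}
    (huv : 0 < w u v) : f u v ≤ sSup (edgeValues w f) :=
  le_csSup (edgeValues_finite w f).bddAbove ⟨u, v, huv, rfl⟩

theorem sInf_edgeValues_nonneg {w f : Fin N → Fin N → ℝ} (hf : ∀ u v, 0 ≤ f u v) :
    0 ≤ sInf (edgeValues w f) :=
  Real.sInf_nonneg <| by rintro x ⟨u, v, -, rfl⟩; exact hf u v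

theorem sSup_edgeValues_nonneg {w f : Fin N → Fin N → ℝ} (hf : ∀ u v, 0 ≤ f u v) :
    0 ≤ sSup (edgeValues w f) :=
  Real.sSup_nonneg <| by rintro x ⟨u, v, -, rfl⟩; exact hf u v

def apexes (w sgn : Fin N → Fin N → ℝ) (s : ℝ) (u v : Fin N) : Finset (Fin N) :=
  univ.filter fun u' => 0 < w u u' ∧ 0 < w v u' ∧ sgn u v * sgn v u' * sgn u' u = s

theorem card_apexes (w sgn : Fin N → Fin N → ℝ) (s : ℝ) (u v : Fin N) :
    (apexes w sgn s u v).card = triCount w sgn s u v := rfl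

def triangleConst (w sgn : Fin N → Fin N → ℝ) (s : ℝ) : ℝ :=
  sInf (edgeValues w w) ^ 2 / sSup (edgeValues w w) *
    (sInf (edgeValues w fun u v => (triCount w sgn s u v : ℝ)) / ⨆ u, deg w u)

theorem triangleConst_nonneg {w : Fin N → Fin N → ℝ} (hw : ∀ u v, 0 ≤ w u v)
    (sgn : Fin N → Fin N → ℝ) (s : ℝ) : 0 ≤ triangleConst w sgn s := by
  have hdeg : 0 ≤ ⨆ u, deg w u := Real.iSup_nonneg fun u => sum_nonneg fun v _ => hw u v
  unfold triangleConst
  have := sInf_edgeValues_nonneg (w := w) fun u v => Nat.cast_nonneg (triCount w sgn s u v)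
  have := sSup_edgeValues_nonneg (w := w) hw
  positivity

theorem triCount_neg (w sgn : Fin N → Fin N → ℝ) (s : ℝ) :
    triCount w (-sgn) s = triCount w sgn (-s) := by
  ext u v
  refine congrArg card (filter_congr fun z _ => ?_)
  have : ∀ a b c : ℝ, -a * -b * -c = -(a * b * c) := fun a b c => by ring
  simp only [Pi.neg_apply, this, neg_eq_iff_eq_neg]

theorem triangleConst_neg (w sgn : Fin N → Fin N → ℝ) (s : ℝ) :
    triangleConst w (-sgn) s = triangleConst w sgn (-s) := by
  rw [triangleConst, triCount_neg, triangleConst]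

theorem adj_neg (w sgn : Fin N → Fin N → ℝ) : adj w (-sgn) = -adj w sgn := by
  ext u v
  simp [adj]

namespace IsWSG

variable {w sgn : Fin N → Fin N → ℝ}

theorem neg (hG : IsWSG w sgn) : IsWSG w (-sgn) where
  w_symm := hG.w_symm
  w_nonneg := hG.w_nonneg
  w_loopless := hG.w_loopless
  sgn_symm u v := by simp only [Pi.neg_apply, hG.sgn_symm u v]
  sgn_pm u v := by
    rcases hG.sgn_pm u v with h | h
    · exact Or.inr (by simp [h])
    · exact Or.inl (by simp [h])

theorem sgn_mul_self (hG : IsWSG w sgn) (u v : Fin N) : sgn u v * sgn u v = 1 := by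
  rcases hG.sgn_pm u v with h | h <;> simp [h]

theorem abs_sgn (hG : IsWSG w sgn) (u v : Fin N) : |sgn u v| = 1 := by
  rcases hG.sgn_pm u v with h | h <;> simp [h]

theorem sgn_mul_sgn_of_mem_apexes (hG : IsWSG w sgn) {u v z : Fin N}
    (hz : z ∈ apexes w sgn (-1) u v) : sgn u z * sgn z v = -sgn u v := by
  have hneg : sgn u v * sgn v z * sgn z u = -1 := (mem_filter.mp hz).2.2.2
  rw [hG.sgn_symm u z, hG.sgn_symm z v]
  linear_combination sgn u v * hneg - sgn v z * sgn z u * hG.sgn_mul_self u v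

theorem triangleConst_mul_le_sum_apexes (hG : IsWSG w sgn) (hd : ∀ u, 0 < deg w u) (s : ℝ)
    (u v : Fin N) :
    triangleConst w sgn s * w u v ≤ ∑ z ∈ apexes w sgn s u v, w u z * w z v / deg w z := by
  have hterm_nonneg : ∀ z, 0 ≤ w u z * w z v / deg w z := fun z =>
    div_nonneg (mul_nonneg (hG.w_nonneg u z) (hG.w_nonneg z v)) (hd z).le
  rcases (hG.w_nonneg u v).eq_or_lt with huv | huv
  · rw [← huv, mul_zero]
    exact sum_nonneg fun z _ => hterm_nonneg z
  set wmin := sInf (edgeValues w w)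
  set wmax := sSup (edgeValues w w)
  set tmin := sInf (edgeValues w fun u v => (triCount w sgn s u v : ℝ))
  set dmax := ⨆ u, deg w u
  have hwmin : 0 ≤ wmin := sInf_edgeValues_nonneg hG.w_nonneg
  have hwmax : w u v ≤ wmax := le_csSup_edgeValues w huv
  have hdmax : ∀ z, deg w z ≤ dmax := le_ciSup (Set.finite_range (deg w)).bddAbove
  have hdmax_pos : 0 < dmax := (hd u).trans_le (hdmax u)
  have hapex : ∀ z ∈ apexes w sgn s u v, wmin * wmin / dmax ≤ w u z * w z v / deg w z := by
    intro z hz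
    obtain ⟨huz, hvz, -⟩ := (mem_filter.mp hz).2
    have h1 : wmin ≤ w u z := csInf_edgeValues_le w huz
    have h2 : wmin ≤ w z v := hG.w_symm v z ▸ csInf_edgeValues_le w hvz
    exact div_le_div₀ (mul_nonneg (hwmin.trans h1) (hG.w_nonneg z v))
      (mul_le_mul h1 h2 hwmin (hwmin.trans h1)) (hd z) (hdmax z)
  calc triangleConst w sgn s * w u v
      ≤ triangleConst w sgn s * wmax :=
        mul_le_mul_of_nonneg_left hwmax (triangleConst_nonneg hG.w_nonneg sgn s)
    _ = tmin * (wmin * wmin / dmax) := by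
        change wmin ^ 2 / wmax * (tmin / dmax) * wmax = _
        field_simp [(huv.trans_le hwmax).ne']
    _ ≤ (apexes w sgn s u v).card * (wmin * wmin / dmax) := by
        gcongr
        exact card_apexes w sgn s u v ▸ csInf_edgeValues_le _ huv
    _ ≤ ∑ z ∈ apexes w sgn s u v, w u z * w z v / deg w z := by
        simpa only [nsmul_eq_mul] using card_nsmul_le_sum _ _ _ hapex

end IsWSG

theorem le_one_sub_of_abs_mul_add_sq_le {c x : ℝ} (h : |c * x + x ^ 2| ≤ 1 - c) :
    x ≤ 1 - c := by
  have h1 := (le_abs_self _).trans h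
  have h2 := (abs_nonneg _).trans h
  by_contra! hx
  nlinarith [mul_pos (by linarith : 0 < x + 1) (sub_pos.mpr hx)]

theorem nlapSym_eq (w sgn : Fin N → Fin N → ℝ) :
    nlapSym w sgn =
      1 - diagonal (fun u => (√(deg w u))⁻¹) * adj w sgn * diagonal fun u => (√(deg w u))⁻¹ := by
  ext u v
  simp only [nlapSym, adj, of_apply, Matrix.sub_apply, one_apply, mul_diagonal, diagonal_mul]
  ring

/-- If `λ` is an eigenvalue of `D⁻¹A^σ`, then `cλ + λ²` is one of `D⁻¹ (adjQuad c w sgn)`. -/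
def adjQuad (c : ℝ) (w sgn : Fin N → Fin N → ℝ) : Matrix (Fin N) (Fin N) ℝ :=
  c • adj w sgn + adj w sgn * diagonal (deg w)⁻¹ * adj w sgn

section

variable {w sgn : Fin N → Fin N → ℝ}

theorem adjQuad_apply (c : ℝ) (u v : Fin N) :
    adjQuad c w sgn u v =
      c * (sgn u v * w u v) + ∑ z, sgn u z * w u z * (deg w z)⁻¹ * (sgn z v * w z v) := by
  rw [adjQuad, Matrix.add_apply, Matrix.smul_apply, mul_apply]
  simp only [mul_diagonal, adj, of_apply, Pi.inv_apply, smul_eq_mul]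

theorem adjQuad_mulVec (hd : ∀ u, 0 < deg w u) {c lam : ℝ} {y : Fin N → ℝ}
    (h : adj w sgn *ᵥ y = lam • (diagonal (deg w) *ᵥ y)) :
    adjQuad c w sgn *ᵥ y = (c * lam + lam ^ 2) • (diagonal (deg w) *ᵥ y) := by
  have hinv : diagonal (deg w)⁻¹ *ᵥ (diagonal (deg w) *ᵥ y) = y := by
    rw [mulVec_mulVec, diagonal_mul_diagonal]
    simp [fun u => inv_mul_cancel₀ (hd u).ne']
  rw [adjQuad, add_mulVec, smul_mulVec, ← mulVec_mulVec, ← mulVec_mulVec, h, mulVec_smul,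
    hinv, mulVec_smul, h]
  module

theorem IsWSG.abs_adjQuad_apply_le (hG : IsWSG w sgn) (hd : ∀ u, 0 < deg w u) (u v : Fin N) :
    |adjQuad (triangleConst w sgn (-1)) w sgn u v| ≤
      ∑ z, w u z * w z v / deg w z - triangleConst w sgn (-1) * w u v := by
  set c := triangleConst w sgn (-1)
  set T := apexes w sgn (-1) u v
  set path : Fin N → ℝ := fun z => w u z * w z v / deg w z
  set term : Fin N → ℝ := fun z => sgn u z * w u z * (deg w z)⁻¹ * (sgn z v * w z v)
  have habs_term : ∀ z, |term z| = path z := fun z => by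
    simp only [term, path, abs_mul, abs_inv, hG.abs_sgn, abs_of_nonneg (hG.w_nonneg _ _),
      abs_of_pos (hd z)]
    ring
  -- on a negative triangle over `uv` the two-step sign is opposite to `σ(u,v)`
  have hneg : ∑ z ∈ T, term z = -sgn u v * ∑ z ∈ T, path z := by
    rw [mul_sum]
    refine sum_congr rfl fun z hz => ?_
    rw [← hG.sgn_mul_sgn_of_mem_apexes hz]
    simp only [term, path]
    ring
  have hcN : c * w u v ≤ ∑ z ∈ T, path z := hG.triangleConst_mul_le_sum_apexes hd (-1) u v
  have hrest : |∑ z ∈ Tᶜ, term z| ≤ ∑ z ∈ Tᶜ, path z :=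
    (abs_sum_le_sum_abs _ _).trans_eq (sum_congr rfl fun z _ => habs_term z)
  calc |adjQuad c w sgn u v|
      = |sgn u v * (c * w u v - ∑ z ∈ T, path z) + ∑ z ∈ Tᶜ, term z| := by
        rw [adjQuad_apply]
        change |c * (sgn u v * w u v) + ∑ z, term z| = _
        rw [← sum_add_sum_compl T, hneg]
        congr 1
        ring
    _ ≤ (∑ z ∈ T, path z - c * w u v) + ∑ z ∈ Tᶜ, path z := by
        refine (abs_add_le _ _).trans (add_le_add (le_of_eq ?_) hrest)
        rw [abs_mul, hG.abs_sgn, one_mul, abs_of_nonpos (by linarith)]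
        ring
    _ = ∑ z, path z - c * w u v := by rw [← sum_add_sum_compl T]; ring

theorem IsWSG.sum_abs_adjQuad_apply_le (hG : IsWSG w sgn) (hd : ∀ u, 0 < deg w u) (u : Fin N) :
    ∑ v, |adjQuad (triangleConst w sgn (-1)) w sgn u v| ≤
      (1 - triangleConst w sgn (-1)) * deg w u := by
  have hpaths : ∑ v, ∑ z, w u z * w z v / deg w z = deg w u := by
    rw [sum_comm]
    refine sum_congr rfl fun z _ => ?_
    rw [← sum_div, ← mul_sum]
    exact mul_div_cancel_right₀ _ (hd z).ne'
  calc ∑ v, |adjQuad (triangleConst w sgn (-1)) w sgn u v|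
      ≤ ∑ v, (∑ z, w u z * w z v / deg w z - triangleConst w sgn (-1) * w u v) :=
        sum_le_sum fun v _ => hG.abs_adjQuad_apply_le hd u v
    _ = (1 - triangleConst w sgn (-1)) * deg w u := by
        rw [sum_sub_distrib, hpaths, ← mul_sum]
        change deg w u - _ * deg w u = _
        ring

theorem IsWSG.le_one_sub_triangleConst (hG : IsWSG w sgn) (hd : ∀ u, 0 < deg w u)
    {y : Fin N → ℝ} (hy : y ≠ 0) {lam : ℝ}
    (h : adj w sgn *ᵥ y = lam • (diagonal (deg w) *ᵥ y)) :
    lam ≤ 1 - triangleConst w sgn (-1) :=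
  le_one_sub_of_abs_mul_add_sq_le <|
    abs_le_of_mulVec_eq_smul_diagonal_mulVec hd hy (adjQuad_mulVec hd h)
      (hG.sum_abs_adjQuad_apply_le hd)

theorem IsWSG.isHermitian_nlapSym (hG : IsWSG w sgn) :
    (nlapSym w sgn).IsHermitian := by
  ext u v
  simp only [conjTranspose_apply, nlapSym, of_apply, star_trivial, hG.w_symm v u,
    hG.sgn_symm v u, eq_comm (a := v), mul_comm (√(deg w v))]

theorem adj_mulVec_eq_of_nlapSym_mulVec (hd : ∀ u, 0 < deg w u)
    {μ : ℝ} {x : Fin N → ℝ} (h : nlapSym w sgn *ᵥ x = μ • x) :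
    adj w sgn *ᵥ (diagonal (fun u => (√(deg w u))⁻¹) *ᵥ x) =
      (1 - μ) • (diagonal (deg w) *ᵥ (diagonal (fun u => (√(deg w u))⁻¹) *ᵥ x)) := by
  set S := diagonal fun u => (√(deg w u))⁻¹
  set S' := diagonal fun u => √(deg w u)
  have hsqrt : ∀ u, √(deg w u) ≠ 0 := fun u => (Real.sqrt_pos.mpr (hd u)).ne'
  have hS'S : S' * S = 1 := by
    simp only [S, S', diagonal_mul_diagonal, mul_inv_cancel₀ (hsqrt _), diagonal_one]
  have hDS : diagonal (deg w) * S = S' := by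
    refine (diagonal_mul_diagonal _ _).trans (congrArg diagonal (funext fun u => ?_))
    exact (div_eq_mul_inv _ _).symm.trans Real.div_sqrt
  have hSAS : S *ᵥ (adj w sgn *ᵥ (S *ᵥ x)) = (1 - μ) • x := by
    have h' : x - S *ᵥ (adj w sgn *ᵥ (S *ᵥ x)) = μ • x := by
      rw [← h, nlapSym_eq, sub_mulVec, one_mulVec, mulVec_mulVec, mulVec_mulVec]
    rw [sub_smul, one_smul, ← h']
    abel
  calc adj w sgn *ᵥ (S *ᵥ x) = S' *ᵥ (S *ᵥ (adj w sgn *ᵥ (S *ᵥ x))) := by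
        rw [mulVec_mulVec _ S' S, hS'S, one_mulVec]
    _ = (1 - μ) • (diagonal (deg w) *ᵥ (S *ᵥ x)) := by
        rw [hSAS, mulVec_smul, mulVec_mulVec, hDS]

theorem IsWSG.eigenvalues_nlapSym_mem_Icc (hG : IsWSG w sgn) (hd : ∀ u, 0 < deg w u)
    (hH : (nlapSym w sgn).IsHermitian) (i : Fin N) :
    hH.eigenvalues i ∈ Set.Icc (triangleConst w sgn (-1)) (2 - triangleConst w sgn 1) := by
  set S := diagonal fun u => (√(deg w u))⁻¹
  set y := S *ᵥ (hH.eigenvectorBasis i).ofLp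
  have hy : y ≠ 0 := by
    have hS : S.det ≠ 0 := by
      simp only [S, det_diagonal, prod_ne_zero_iff, ne_eq, inv_eq_zero]
      exact fun u _ => (Real.sqrt_pos.mpr (hd u)).ne'
    exact fun h0 => hH.eigenvectorBasis.orthonormal.ne_zero i
      ((WithLp.ofLp_eq_zero _).mp (eq_zero_of_mulVec_eq_zero hS h0))
  have heig := adj_mulVec_eq_of_nlapSym_mulVec hd (hH.mulVec_eigenvectorBasis i)
  have heig_neg : adj w (-sgn) *ᵥ y = (hH.eigenvalues i - 1) • (diagonal (deg w) *ᵥ y) := by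
    rw [adj_neg, neg_mulVec, heig, ← neg_smul, neg_sub]
  have hlow := hG.le_one_sub_triangleConst hd hy heig
  have hup := hG.neg.le_one_sub_triangleConst hd hy heig_neg
  rw [triangleConst_neg, neg_neg] at hup
  constructor <;> linarith

end

/-- For a weighted signed graph with at least one edge,
`(w²/W)·(min_{u∼v} ♯⁻(u,v))/(max_u d(u)) ≤ λ₁(Δ^σ)` and
`λ_N(Δ^σ) ≤ 2 − (w²/W)·(min_{u∼v} ♯⁺(u,v))/(max_u d(u))`. -/
theorem triangle_eigenvalue_bounds {N : ℕ} (hN : 0 < N) (w sgn : Fin N → Fin N → ℝ)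
    (hG : IsWSG w sgn) (hd : ∀ u, 0 < deg w u) :
    (sInf {x | ∃ u v, 0 < w u v ∧ x = w u v}) ^ 2 /
        sSup {x | ∃ u v, 0 < w u v ∧ x = w u v} *
        (sInf {x | ∃ u v, 0 < w u v ∧ x = (triCount w sgn (-1) u v : ℝ)} /
          (⨆ u, deg w u)) ≤
      evals (nlapSym w sgn) ⟨0, hN⟩ ∧
    evals (nlapSym w sgn) ⟨N - 1, by omega⟩ ≤
      2 - (sInf {x | ∃ u v, 0 < w u v ∧ x = w u v}) ^ 2 /
            sSup {x | ∃ u v, 0 < w u v ∧ x = w u v} *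
            (sInf {x | ∃ u v, 0 < w u v ∧ x = (triCount w sgn 1 u v : ℝ)} /
              (⨆ u, deg w u)) := by
  have hH := hG.isHermitian_nlapSym
  rw [evals, dif_pos hH]
  exact ⟨(hG.eigenvalues_nlapSym_mem_Icc hd hH _).1, (hG.eigenvalues_nlapSym_mem_Icc hd hH _).2⟩

end SignedGraph
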